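/- For every integer n ≥ 1, the image of the generator a in G_n = ⟨a, b ∣ a b a⁻¹ b, a^{2n}⟩ has order exactly 2n. -/
import Mathlib


namespace Stmt9

def a : FreeGroup (Fin 2) := FreeGroup.of 0
def b : FreeGroup (Fin 2) := FreeGroup.of 1

/-- The relators `a b a⁻¹ b` and `a^(2n)`. -/
def rels (n : ℕ) : Set (FreeGroup (Fin 2)) := {a * b * a⁻¹ * b, a ^ (2 * n)}

/-- The group `G_n = ⟨a, b ∣ a b a⁻¹ b, a^(2n)⟩`. -/
abbrev G (n : ℕ) := PresentedGroup (rels n)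

/-- For every `n ≥ 1`, the image of `a` in `G_n` has order exactly `2n`. -/
theorem orderOf_a (n : ℕ) (hn : 1 ≤ n) :
    orderOf (PresentedGroup.of (rels := rels n) 0) = 2 * n := by
  set x : G n := PresentedGroup.of (rels := rels n) 0 with hx
  -- x ^ (2*n) = 1
  have h1 : x ^ (2 * n) = 1 := by
    have : PresentedGroup.mk (rels n) (a ^ (2 * n)) = 1 := by
      apply (QuotientGroup.eq_one_iff _).mpr
      exact Subgroup.subset_normalClosure (by simp [rels])
    simpa [hx, PresentedGroup.of, a, map_pow] using this
  -- homomorphism to ZMod (2n)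
  haveI : NeZero (2 * n) := ⟨by omega⟩
  let g : Fin 2 → Multiplicative (ZMod (2 * n)) :=
    ![Multiplicative.ofAdd 1, Multiplicative.ofAdd (n : ZMod (2 * n))]
  have hg : ∀ r ∈ rels n, FreeGroup.lift g r = 1 := by
    intro r hr
    have h2n : ((2 * n : ℕ) : ZMod (2 * n)) = 0 := by
      simp [ZMod.natCast_self]
    rcases hr with h | h <;> subst h
    · show FreeGroup.lift g (a * b * a⁻¹ * b) = 1
      simp only [a, b, map_mul, map_inv, FreeGroup.lift_apply_of, g]
      simp only [Matrix.cons_val_zero, Matrix.cons_val_one, Matrix.head_cons]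
      rw [← ofAdd_neg, ← ofAdd_add, ← ofAdd_add, ← ofAdd_add]
      have : (1 : ZMod (2*n)) + n + -1 + n = 0 := by
        push_cast at h2n ⊢
        ring_nf
        ring_nf at h2n
        linear_combination h2n
      rw [this]; rfl
    · show FreeGroup.lift g (a ^ (2 * n)) = 1
      simp only [a, map_pow, FreeGroup.lift_apply_of, g]
      simp only [Matrix.cons_val_zero]
      rw [← ofAdd_nsmul]
      simp [h2n]
  let f : G n →* Multiplicative (ZMod (2 * n)) := PresentedGroup.toGroup hg
  have hfx : f x = Multiplicative.ofAdd (1 : ZMod (2 * n)) := by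
    simp [f, hx, PresentedGroup.toGroup.of, g]
  have ho : orderOf (f x) = 2 * n := by
    rw [hfx]
    rw [orderOf_ofAdd_eq_addOrderOf]
    exact ZMod.addOrderOf_one (2 * n)
  exact Nat.dvd_antisymm (orderOf_dvd_of_pow_eq_one h1) (ho ▸ orderOf_map_dvd f x)

end Stmt9
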